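/- Let m ≥ 1 and let G be a simple graph on the vertex set {0, …, m−1} admitting no proper 3-coloring. Let ψ, ψ' ∈ ℂ^m ⊗ ℂ³ be unit vectors in decomposed form with amplitudes (α_v, β_{v,j}) and (α'_v, β'_{v,j}) respectively, and suppose that both states satisfy the following: ‖(I_m ⊗ u₃u₃*) ψ‖² ≥ 1/12 and ‖(I_m ⊗ u₃u₃*) ψ'‖² ≥ 1/12, and ‖((I_m − u_m u_m*) ⊗ u₃u₃*) ψ‖² ≤ 1/(200 m²) and ‖((I_m − u_m u_m*) ⊗ u₃u₃*) ψ'‖² ≤ 1/(200 m²). Then the pairwise consistency rejection probability satisfies R_sv + R_edge(G) ≥ 1/(6000 m²), where R_sv = Σ_{v<m} Σ_{j≠j'} |α_v|² |β_{v,j}|² |α'_v|² |β'_{v,j'}|² and R_edge(G) = Σ_{{u,v} ∈ E(G)} Σ_{j<3} (|α_u|²|β_{u,j}|²|α'_v|²|β'_{v,j}|² + |α_v|²|β_{v,j}|²|α'_u|²|β'_{u,j}|²). -/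

import Mathlib

/-!
The Uniformity-Test bound forces every vertex to carry weight `|α_v|² ≥ 41/(1200 m)` (and likewise
for `ψ'`): the projected amplitudes `s_v = α_v Σ_j β_{v,j}` have total mass `≥ 1/4` and stay close
to their mean `μ`, so the parallel-axis identity `Σ |s_v - μ|² = Σ |s_v|² - m |μ|²` makes `|μ|²`,
hence every `|s_v|²`, of order `1/m`, while `|s_v|² ≤ 3 |α_v|²`. Then either at some vertex the
color distributions of `ψ` and `ψ'` collide with probability `≤ 17/20`, and `R_sv` is large; or at
every vertex some color has probability `≥ 17/60` under both, and since `G` is not 3-colorable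
these colors agree along some edge, which makes `R_edge` large.
-/

/-- A function `ι → ℂ` viewed as a vector of the Euclidean space `ℂ^ι`. -/
noncomputable def toEuc {ι : Type*} [Fintype ι] (f : ι → ℂ) : EuclideanSpace ℂ ι := WithLp.toLp 2 f

open Finset

lemma sum_norm_sub_mean_sq {𝕜 ι E : Type*} [RCLike 𝕜] [Fintype ι] [NormedAddCommGroup E]
    [InnerProductSpace 𝕜 E] (s : ι → E) :
    ∑ i, ‖s i - (Fintype.card ι : 𝕜)⁻¹ • ∑ j, s j‖ ^ 2
      = ∑ i, ‖s i‖ ^ 2 - Fintype.card ι * ‖(Fintype.card ι : 𝕜)⁻¹ • ∑ j, s j‖ ^ 2 := by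
  set μ := (Fintype.card ι : 𝕜)⁻¹ • ∑ j, s j
  rcases isEmpty_or_nonempty ι with _ | _
  · simp
  have hsum : ∑ j, s j = (Fintype.card ι : 𝕜) • μ := by
    rw [smul_inv_smul₀ (by exact_mod_cast Fintype.card_ne_zero)]
  have hinner : ∑ i, RCLike.re (inner 𝕜 (s i) μ) = Fintype.card ι * ‖μ‖ ^ 2 := by
    rw [← map_sum, ← sum_inner, hsum, inner_smul_left, inner_self_eq_norm_sq_to_K]
    simp
  simp only [norm_sub_sq (𝕜 := 𝕜), sum_add_distrib, sum_sub_distrib, ← mul_sum, hinner,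
    sum_const, card_univ, nsmul_eq_mul]
  ring

lemma le_norm_sq_of_sum_norm_sub_mean_sq_le {𝕜 ι E : Type*} [RCLike 𝕜] [Fintype ι]
    [NormedAddCommGroup E] [InnerProductSpace 𝕜 E] (s : ι → E) {A B : ℝ}
    (hA : A ≤ ∑ i, ‖s i‖ ^ 2)
    (hB : ∑ i, ‖s i - (Fintype.card ι : 𝕜)⁻¹ • ∑ j, s j‖ ^ 2 ≤ B) (i : ι) :
    (A - B) / (2 * Fintype.card ι) - B ≤ ‖s i‖ ^ 2 := by
  set μ := (Fintype.card ι : 𝕜)⁻¹ • ∑ j, s j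
  have hn : (0 : ℝ) < Fintype.card ι := by exact_mod_cast Fintype.card_pos_iff.mpr ⟨i⟩
  have hμ : A - B ≤ Fintype.card ι * ‖μ‖ ^ 2 := by
    linarith [sum_norm_sub_mean_sq (𝕜 := 𝕜) s]
  have hi : ‖s i - μ‖ ^ 2 ≤ B :=
    (single_le_sum (f := fun i => ‖s i - μ‖ ^ 2) (fun _ _ => by positivity) (mem_univ i)).trans hB
  have htri : ‖μ‖ ^ 2 ≤ 2 * (‖s i‖ ^ 2 + ‖s i - μ‖ ^ 2) := by
    calc ‖μ‖ ^ 2 ≤ (‖s i‖ + ‖s i - μ‖) ^ 2 := by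
          gcongr; simpa using norm_sub_le (s i) (s i - μ)
      _ ≤ 2 * (‖s i‖ ^ 2 + ‖s i - μ‖ ^ 2) := add_sq_le
  rw [sub_le_iff_le_add, div_le_iff₀ (by positivity)]
  nlinarith

lemma norm_sum_sq_le_card_mul {ι E : Type*} [Fintype ι] [SeminormedAddCommGroup E] (b : ι → E) :
    ‖∑ i, b i‖ ^ 2 ≤ Fintype.card ι * ∑ i, ‖b i‖ ^ 2 :=
  (pow_le_pow_left₀ (norm_nonneg _) (norm_sum_le _ _) 2).trans (sq_sum_le_card_mul_sum_sq ..)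

lemma exists_le_and_le_of_le_sum_mul {ι : Type*} [Fintype ι] {x y : ι → ℝ}
    (hx₀ : ∀ j, 0 ≤ x j) (hx : ∑ j, x j = 1) (hy₀ : ∀ j, 0 ≤ y j) (hy : ∑ j, y j = 1)
    {t : ℝ} (ht : t ≤ ∑ j, x j * y j) :
    ∃ j, t / Fintype.card ι ≤ x j ∧ t / Fintype.card ι ≤ y j := by
  have hne : (univ : Finset ι).Nonempty := by
    by_contra h
    simp [not_nonempty_iff_eq_empty.mp h] at hx
  obtain ⟨j, -, hj⟩ := exists_le_of_sum_le hne (f := fun _ => t / Fintype.card ι)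
    (g := fun j => x j * y j) (by
      rw [sum_const, card_univ, nsmul_eq_mul, mul_div_cancel₀ _ (by exact_mod_cast hne.card_pos.ne')]
      exact ht)
  have hx₁ : x j ≤ 1 := hx ▸ single_le_sum (fun i _ => hx₀ i) (mem_univ j)
  have hy₁ : y j ≤ 1 := hy ▸ single_le_sum (fun i _ => hy₀ i) (mem_univ j)
  exact ⟨j, hj.trans (mul_le_of_le_one_right (hx₀ j) hy₁),
    hj.trans (mul_le_of_le_one_left (hy₀ j) hx₁)⟩

lemma SimpleGraph.exists_adj_eq_of_not_colorable {V : Type*} {G : SimpleGraph V} {n : ℕ}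
    (hG : ¬ G.Colorable n) (c : V → Fin n) : ∃ u v, G.Adj u v ∧ c u = c v := by
  by_contra! h
  exact hG ⟨SimpleGraph.Coloring.mk c fun huv => h _ _ huv⟩

lemma sum_sum_ite_ne {C M : Type*} [Fintype C] [DecidableEq C] [AddCommGroup M]
    (g : C → C → M) :
    ∑ j, ∑ j', (if j = j' then 0 else g j j') = ∑ j, ∑ j', g j j' - ∑ j, g j j := by
  have h : ∀ j j', (if j = j' then 0 else g j j') = g j j' - if j = j' then g j j' else 0 := by
    intro j j'; split_ifs <;> simp
  simp only [h, sum_sub_distrib, sum_ite_eq, mem_univ, if_true]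

lemma norm_toEuc_third_sq {ι : Type*} [Fintype ι] (f : ι → ℂ) :
    ‖toEuc (fun q : ι × Fin 3 => (1 / 3 : ℂ) * f q.1)‖ ^ 2 = (∑ i, ‖f i‖ ^ 2) / 3 := by
  rw [EuclideanSpace.norm_sq_eq, Fintype.sum_prod_type, sum_div]
  refine sum_congr rfl fun i _ => ?_
  change ∑ _j : Fin 3, ‖(1 / 3 : ℂ) * f i‖ ^ 2 = _
  rw [sum_const, card_univ, Fintype.card_fin, norm_mul, mul_pow]
  norm_num
  ring

lemma le_norm_sq_vertex_amplitude {m : ℕ} (α : Fin m → ℂ) (β : Fin m → Fin 3 → ℂ)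
    (hβ : ∀ v, ∑ j, ‖β v j‖ ^ 2 = 1)
    (hp : ‖toEuc (fun q : Fin m × Fin 3 =>
        (1 / 3 : ℂ) * (α q.1 * ∑ j', β q.1 j'))‖ ^ 2 ≥ 1 / 12)
    (hRunif : ‖toEuc (fun q : Fin m × Fin 3 =>
          (1 / 3 : ℂ) * (α q.1 * ∑ j', β q.1 j')
            - (1 / (3 * (m : ℂ))) * ∑ v', (α v' * ∑ j', β v' j'))‖ ^ 2
      ≤ 1 / (200 * (m : ℝ) ^ 2)) (v : Fin m) :
    41 / (1200 * (m : ℝ)) ≤ ‖α v‖ ^ 2 := by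
  set s : Fin m → ℂ := fun v => α v * ∑ j, β v j
  have hm : (1 : ℝ) ≤ m := by exact_mod_cast v.pos
  have hs : 1 / 4 ≤ ∑ v, ‖s v‖ ^ 2 := by
    rw [norm_toEuc_third_sq s] at hp; linarith
  have hspread : ∑ v, ‖s v - (Fintype.card (Fin m) : ℂ)⁻¹ • ∑ w, s w‖ ^ 2
      ≤ 3 / (200 * (m : ℝ) ^ 2) := by
    have hfactor : (fun q : Fin m × Fin 3 => (1 / 3 : ℂ) * s q.1 - 1 / (3 * (m : ℂ)) * ∑ w, s w) =
        fun q => (1 / 3 : ℂ) * (s q.1 - (Fintype.card (Fin m) : ℂ)⁻¹ • ∑ w, s w) := by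
      ext q; simp only [Fintype.card_fin, smul_eq_mul]; ring
    rw [hfactor, norm_toEuc_third_sq (fun v => s v - _)] at hRunif
    linarith [show (3 : ℝ) / (200 * m ^ 2) = 3 * (1 / (200 * m ^ 2)) by ring]
  have hsv := le_norm_sq_of_sum_norm_sub_mean_sq_le s hs hspread v
  rw [Fintype.card_fin] at hsv
  have hsv' : 41 / (400 * (m : ℝ)) ≤ ‖s v‖ ^ 2 := by
    refine le_trans ?_ hsv
    rw [div_sub' (by positivity), div_le_div_iff₀ (by positivity) (by positivity)]
    field_simp
    nlinarith
  have hβv : ‖∑ j, β v j‖ ^ 2 ≤ 3 := by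
    simpa [hβ v] using norm_sum_sq_le_card_mul (β v)
  have hsα : ‖s v‖ ^ 2 ≤ 3 * ‖α v‖ ^ 2 := by
    simp only [s, norm_mul, mul_pow]
    nlinarith [sq_nonneg ‖α v‖]
  rw [div_le_iff₀ (by positivity)] at hsv' ⊢
  nlinarith

section Rejection

variable {V C : Type*} [Fintype C] (α α' : V → ℂ) (β β' : V → C → ℂ)

noncomputable def sameVertexRejection [Fintype V] [DecidableEq C] : ℝ :=
  ∑ v, ∑ j, ∑ j', if j = j' then 0 else
    ‖α v‖ ^ 2 * ‖β v j‖ ^ 2 * ‖α' v‖ ^ 2 * ‖β' v j'‖ ^ 2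

noncomputable def edgePairRejection (u v : V) : ℝ :=
  ∑ j, (‖α u‖ ^ 2 * ‖β u j‖ ^ 2 * ‖α' v‖ ^ 2 * ‖β' v j‖ ^ 2
    + ‖α v‖ ^ 2 * ‖β v j‖ ^ 2 * ‖α' u‖ ^ 2 * ‖β' u j‖ ^ 2)

noncomputable def edgeRejection [Fintype V] [LinearOrder V] (G : SimpleGraph V)
    [DecidableRel G.Adj] : ℝ :=
  ∑ u, ∑ v, if G.Adj u v ∧ u < v then edgePairRejection α α' β β' u v else 0

lemma sameVertexRejection_nonneg [Fintype V] [DecidableEq C] :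
    0 ≤ sameVertexRejection α α' β β' :=
  sum_nonneg fun _ _ => sum_nonneg fun _ _ => sum_nonneg fun _ _ => by split_ifs <;> positivity

lemma le_sameVertexRejection [Fintype V] [DecidableEq C] (v : V)
    (hβ : ∑ j, ‖β v j‖ ^ 2 = 1) (hβ' : ∑ j, ‖β' v j‖ ^ 2 = 1) :
    ‖α v‖ ^ 2 * ‖α' v‖ ^ 2 * (1 - ∑ j, ‖β v j‖ ^ 2 * ‖β' v j‖ ^ 2)
      ≤ sameVertexRejection α α' β β' := by
  set R : V → ℝ := fun v => ∑ j, ∑ j', if j = j' then 0 else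
    ‖α v‖ ^ 2 * ‖β v j‖ ^ 2 * ‖α' v‖ ^ 2 * ‖β' v j'‖ ^ 2
  have hRv : R v = ‖α v‖ ^ 2 * ‖α' v‖ ^ 2 *
      ((∑ j, ‖β v j‖ ^ 2) * (∑ j, ‖β' v j‖ ^ 2) - ∑ j, ‖β v j‖ ^ 2 * ‖β' v j‖ ^ 2) := by
    have hf : ∀ j j', ‖α v‖ ^ 2 * ‖β v j‖ ^ 2 * ‖α' v‖ ^ 2 * ‖β' v j'‖ ^ 2
        = ‖α v‖ ^ 2 * ‖α' v‖ ^ 2 * (‖β v j‖ ^ 2 * ‖β' v j'‖ ^ 2) := fun _ _ => by ring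
    simp only [R, sum_sum_ite_ne, hf]
    simp only [← mul_sum, ← mul_sub, sum_mul_sum]
  rw [hβ, hβ', one_mul] at hRv
  rw [← hRv]
  exact single_le_sum (f := R) (fun _ _ => sum_nonneg fun _ _ => sum_nonneg fun _ _ => by
    split_ifs <;> positivity) (mem_univ v)

lemma edgePairRejection_nonneg (u v : V) : 0 ≤ edgePairRejection α α' β β' u v :=
  sum_nonneg fun _ _ => by positivity

lemma edgePairRejection_comm (u v : V) :
    edgePairRejection α α' β β' u v = edgePairRejection α α' β β' v u := by
  simp only [edgePairRejection, add_comm]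

lemma le_edgePairRejection (u v : V) (j : C) :
    ‖α u‖ ^ 2 * ‖β u j‖ ^ 2 * ‖α' v‖ ^ 2 * ‖β' v j‖ ^ 2
      + ‖α v‖ ^ 2 * ‖β v j‖ ^ 2 * ‖α' u‖ ^ 2 * ‖β' u j‖ ^ 2
      ≤ edgePairRejection α α' β β' u v :=
  single_le_sum (f := fun j => ‖α u‖ ^ 2 * ‖β u j‖ ^ 2 * ‖α' v‖ ^ 2 * ‖β' v j‖ ^ 2
      + ‖α v‖ ^ 2 * ‖β v j‖ ^ 2 * ‖α' u‖ ^ 2 * ‖β' u j‖ ^ 2) (fun _ _ => by positivity)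
    (mem_univ j)

variable [Fintype V] [LinearOrder V] (G : SimpleGraph V) [DecidableRel G.Adj]

lemma edgeRejection_nonneg : 0 ≤ edgeRejection α α' β β' G :=
  sum_nonneg fun u _ => sum_nonneg fun v _ => by
    split_ifs
    exacts [edgePairRejection_nonneg α α' β β' u v, le_rfl]

lemma edgePairRejection_le_edgeRejection {u v : V} (huv : G.Adj u v) :
    edgePairRejection α α' β β' u v ≤ edgeRejection α α' β β' G := by
  set E : V → V → ℝ := fun u v => if G.Adj u v ∧ u < v then edgePairRejection α α' β β' u v else 0
  have hE : ∀ u v, 0 ≤ E u v := fun u v => by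
    simp only [E]; split_ifs
    exacts [edgePairRejection_nonneg α α' β β' u v, le_rfl]
  have hlt : ∀ {u v}, G.Adj u v → u < v →
      edgePairRejection α α' β β' u v ≤ edgeRejection α α' β β' G := fun {u v} huv hlt =>
    calc edgePairRejection α α' β β' u v = E u v := (if_pos ⟨huv, hlt⟩).symm
      _ ≤ ∑ v', E u v' := single_le_sum (fun v' _ => hE u v') (mem_univ v)
      _ ≤ ∑ u', ∑ v', E u' v' :=
        single_le_sum (f := fun u' => ∑ v', E u' v') (fun u' _ => sum_nonneg fun v' _ => hE u' v')
          (mem_univ u)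
  rcases huv.ne.lt_or_gt with h | h
  · exact hlt huv h
  · exact edgePairRejection_comm α α' β β' u v ▸ hlt huv.symm h

lemma le_edgeRejection_of_adj_of_eq (col : V → C) {a b : ℝ} (ha : 0 ≤ a) (hb : 0 ≤ b)
    (hα : ∀ w, a ≤ ‖α w‖ ^ 2) (hα' : ∀ w, a ≤ ‖α' w‖ ^ 2)
    (hβ : ∀ w, b ≤ ‖β w (col w)‖ ^ 2) (hβ' : ∀ w, b ≤ ‖β' w (col w)‖ ^ 2)
    {u v : V} (huv : G.Adj u v) (hc : col u = col v) :
    2 * (a * b) ^ 2 ≤ edgeRejection α α' β β' G := by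
  calc 2 * (a * b) ^ 2 = a * b * a * b + a * b * a * b := by ring
    _ ≤ ‖α u‖ ^ 2 * ‖β u (col u)‖ ^ 2 * ‖α' v‖ ^ 2 * ‖β' v (col u)‖ ^ 2
        + ‖α v‖ ^ 2 * ‖β v (col u)‖ ^ 2 * ‖α' u‖ ^ 2 * ‖β' u (col u)‖ ^ 2 := by
      gcongr
      exacts [hα u, hβ u, hα' v, hc ▸ hβ' v, hα v, hc ▸ hβ v, hα' u, hβ' u]
    _ ≤ edgePairRejection α α' β β' u v := le_edgePairRejection α α' β β' u v (col u)
    _ ≤ edgeRejection α α' β β' G := edgePairRejection_le_edgeRejection α α' β β' G huv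

end Rejection

theorem chen_drucker_consistency_soundness_general (m : ℕ)
    (G : SimpleGraph (Fin m)) [DecidableRel G.Adj]
    (hG : ¬ G.Colorable 3)
    (α α' : Fin m → ℂ) (β β' : Fin m → Fin 3 → ℂ)
    (hβ : ∀ v, ∑ j, ‖β v j‖ ^ 2 = 1)
    (hβ' : ∀ v, ∑ j, ‖β' v j‖ ^ 2 = 1)
    (hp : ‖toEuc (fun q : Fin m × Fin 3 =>
        (1 / 3 : ℂ) * (α q.1 * ∑ j', β q.1 j'))‖ ^ 2 ≥ 1 / 12)
    (hp' : ‖toEuc (fun q : Fin m × Fin 3 =>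
        (1 / 3 : ℂ) * (α' q.1 * ∑ j', β' q.1 j'))‖ ^ 2 ≥ 1 / 12)
    (hRunif : ‖toEuc (fun q : Fin m × Fin 3 =>
          (1 / 3 : ℂ) * (α q.1 * ∑ j', β q.1 j')
            - (1 / (3 * (m : ℂ))) * ∑ v', (α v' * ∑ j', β v' j'))‖ ^ 2
      ≤ 1 / (200 * (m : ℝ) ^ 2))
    (hRunif' : ‖toEuc (fun q : Fin m × Fin 3 =>
          (1 / 3 : ℂ) * (α' q.1 * ∑ j', β' q.1 j')
            - (1 / (3 * (m : ℂ))) * ∑ v', (α' v' * ∑ j', β' v' j'))‖ ^ 2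
      ≤ 1 / (200 * (m : ℝ) ^ 2)) :
    (∑ v, ∑ j, ∑ j', (if j = j' then 0 else
        ‖α v‖ ^ 2 * ‖β v j‖ ^ 2 *
          ‖α' v‖ ^ 2 * ‖β' v j'‖ ^ 2))
    + (∑ u, ∑ v, if G.Adj u v ∧ u < v then ∑ j : Fin 3,
        (‖α u‖ ^ 2 * ‖β u j‖ ^ 2 *
            ‖α' v‖ ^ 2 * ‖β' v j‖ ^ 2
          + ‖α v‖ ^ 2 * ‖β v j‖ ^ 2 *
            ‖α' u‖ ^ 2 * ‖β' u j‖ ^ 2) else 0)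
    ≥ 1 / (6000 * (m : ℝ) ^ 2) := by
  change 1 / (6000 * (m : ℝ) ^ 2) ≤ sameVertexRejection α α' β β' + edgeRejection α α' β β' G
  have hA := le_norm_sq_vertex_amplitude α β hβ hp hRunif
  have hA' := le_norm_sq_vertex_amplitude α' β' hβ' hp' hRunif'
  -- `17/20` balances the two cases: for `a = 41/(1200 m)`, both `(3/20) a²` and `2 (17/60 · a)²`
  -- exceed `1/(6000 m²)`.
  by_cases hcons : ∀ v, 17 / 20 ≤ ∑ j, ‖β v j‖ ^ 2 * ‖β' v j‖ ^ 2
  · choose col hcol using fun v => exists_le_and_le_of_le_sum_mul (fun j => sq_nonneg ‖β v j‖)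
      (hβ v) (fun j => sq_nonneg ‖β' v j‖) (hβ' v) (hcons v)
    norm_num at hcol
    obtain ⟨u, v, huv, hc⟩ := SimpleGraph.exists_adj_eq_of_not_colorable hG col
    have hm : (1 : ℝ) ≤ m := by exact_mod_cast u.pos
    calc 1 / (6000 * (m : ℝ) ^ 2) ≤ 2 * (41 / (1200 * (m : ℝ)) * (17 / 60)) ^ 2 := by
          rw [div_le_iff₀ (by positivity)]; field_simp; nlinarith
      _ ≤ edgeRejection α α' β β' G :=
        le_edgeRejection_of_adj_of_eq α α' β β' G col (by positivity) (by norm_num) hA hA'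
          (fun w => (hcol w).1) (fun w => (hcol w).2) huv hc
      _ ≤ _ := le_add_of_nonneg_left (sameVertexRejection_nonneg α α' β β')
  · push Not at hcons
    obtain ⟨v, hv⟩ := hcons
    have hm : (1 : ℝ) ≤ m := by exact_mod_cast v.pos
    calc 1 / (6000 * (m : ℝ) ^ 2) ≤ 41 / (1200 * (m : ℝ)) * (41 / (1200 * m)) * (3 / 20) := by
          rw [div_le_iff₀ (by positivity)]; field_simp; nlinarith
      _ ≤ ‖α v‖ ^ 2 * ‖α' v‖ ^ 2 * (1 - ∑ j, ‖β v j‖ ^ 2 * ‖β' v j‖ ^ 2) := by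
        gcongr
        exacts [hA v, hA' v, by linarith]
      _ ≤ sameVertexRejection α α' β β' := le_sameVertexRejection α α' β β' v (hβ v) (hβ' v)
      _ ≤ _ := le_add_of_nonneg_right (edgeRejection_nonneg α α' β β' G)

/-- **Soundness of the consistency test (Chen–Drucker).**
If `G` admits no proper 3-coloring, and `ψ, ψ'` are decomposed unit vectors in
`ℂ^m ⊗ ℂ³` whose color registers yield the uniform-projection outcome with
probability at least `1/12` and whose Uniformity-Test rejection probabilities
are at most `1/(200 m²)`, then the pairwise consistency rejection probability
satisfies `R_sv + R_edge(G) ≥ 1/(6000 m²)`. Each edge `{u,v}` of `G` is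
counted once (as the ordered pair with `u < v`), with both orientation terms. -/
theorem chen_drucker_consistency_soundness (m : ℕ) (hm : 1 ≤ m)
    (G : SimpleGraph (Fin m)) [DecidableRel G.Adj]
    (hG : ¬ G.Colorable 3)
    (α α' : Fin m → ℂ) (β β' : Fin m → Fin 3 → ℂ)
    (hα : ∑ v, ‖α v‖ ^ 2 = 1)
    (hα' : ∑ v, ‖α' v‖ ^ 2 = 1)
    (hβ : ∀ v, ∑ j, ‖β v j‖ ^ 2 = 1)
    (hβ' : ∀ v, ∑ j, ‖β' v j‖ ^ 2 = 1)
    (hp : ‖toEuc (fun q : Fin m × Fin 3 =>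
        (1 / 3 : ℂ) * (α q.1 * ∑ j', β q.1 j'))‖ ^ 2 ≥ 1 / 12)
    (hp' : ‖toEuc (fun q : Fin m × Fin 3 =>
        (1 / 3 : ℂ) * (α' q.1 * ∑ j', β' q.1 j'))‖ ^ 2 ≥ 1 / 12)
    (hRunif : ‖toEuc (fun q : Fin m × Fin 3 =>
          (1 / 3 : ℂ) * (α q.1 * ∑ j', β q.1 j')
            - (1 / (3 * (m : ℂ))) * ∑ v', (α v' * ∑ j', β v' j'))‖ ^ 2
      ≤ 1 / (200 * (m : ℝ) ^ 2))
    (hRunif' : ‖toEuc (fun q : Fin m × Fin 3 =>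
          (1 / 3 : ℂ) * (α' q.1 * ∑ j', β' q.1 j')
            - (1 / (3 * (m : ℂ))) * ∑ v', (α' v' * ∑ j', β' v' j'))‖ ^ 2
      ≤ 1 / (200 * (m : ℝ) ^ 2)) :
    (∑ v, ∑ j, ∑ j', (if j = j' then 0 else
        ‖α v‖ ^ 2 * ‖β v j‖ ^ 2 *
          ‖α' v‖ ^ 2 * ‖β' v j'‖ ^ 2))
    + (∑ u, ∑ v, if G.Adj u v ∧ u < v then ∑ j : Fin 3,
        (‖α u‖ ^ 2 * ‖β u j‖ ^ 2 *
            ‖α' v‖ ^ 2 * ‖β' v j‖ ^ 2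
          + ‖α v‖ ^ 2 * ‖β v j‖ ^ 2 *
            ‖α' u‖ ^ 2 * ‖β' u j‖ ^ 2) else 0)
    ≥ 1 / (6000 * (m : ℝ) ^ 2) :=
  chen_drucker_consistency_soundness_general m G hG α α' β β' hβ hβ' hp hp' hRunif hRunif'
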